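/- Let q be a prime power, k ≥ 2 an integer, and t = ⌊(k+2)/4⌋. Then the number N_{k,q} of connected components of the graph D(k,q) satisfies N_{k,q} ≥ q^{t−1}. -/

import Mathlib

/-!
For every `r ≥ 2` with `4r - 2 ≤ k` there is a polynomial `a_r` in the coordinates, with one
form for points and one for lines, such that an incident point and line have the same value of
`a_r`: substituting the incidence equations into the line form, the extra terms cancel in pairs
after a shift of the summation index. The vector `(a_2, …, a_t)` is therefore constant on connected
components, and it takes every value in `F^{t-1}` already on points with a single nonzero
coordinate in each block (`u'_{rr} = -a_r`), so there are at least `q^{t-1}` components.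
-/

/-- Extend a vector `Fin k → F` to `ℕ → F` by zeros. -/
def extD {F : Type} [Zero F] {k : ℕ} (v : Fin k → F) : ℕ → F :=
  fun m => if h : m < k then v ⟨m, h⟩ else 0

/-- Right-hand side of the `m`-th incidence equation of `D(k,q)`
(coordinates are numbered from `0`, so the `m`-th equation concerns the
coordinate with index `m`). -/
def rhsD {F : Type} [Mul F] (p l : ℕ → F) : ℕ → F
  | 1 => l 0 * p 0
  | 2 => l 1 * p 0
  | m => if m % 4 = 0 ∨ m % 4 = 3 then l 0 * p (m - 2) else l (m - 2) * p 0

/-- The incidence relation between a point `p` and a line `l`: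
the first `k - 1` incidence equations hold. -/
def incD {F : Type} [Field F] (k : ℕ) (p l : Fin k → F) : Prop :=
  ∀ m, 1 ≤ m → m < k → extD l m - extD p m = rhsD (extD p) (extD l) m

/-- The bipartite graph `D(k,q)`; vertices are points (`Sum.inl`) and
lines (`Sum.inr`), both copies of `GF(q)^k`. -/
def DGraph (k : ℕ) (F : Type) [Field F] :
    SimpleGraph ((Fin k → F) ⊕ (Fin k → F)) where
  Adj x y :=
    match x, y with
    | Sum.inl p, Sum.inr l => incD k p l
    | Sum.inr l, Sum.inl p => incD k p l
    | Sum.inl _, Sum.inl _ => False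
    | Sum.inr _, Sum.inr _ => False
  symm := by constructor; rintro (p | l) (p' | l') h <;> exact h
  loopless := by constructor; rintro (p | l) h <;> exact h

open Finset

theorem SimpleGraph.card_le_card_connectedComponent_of_surjective {V α : Type*} [Finite V]
    (G : SimpleGraph V) (φ : V → α) (hφ : ∀ v w, G.Adj v w → φ v = φ w)
    (hsurj : Function.Surjective φ) : Nat.card α ≤ Nat.card G.ConnectedComponent := by
  have hwalk : ∀ v w, G.Walk v w → φ v = φ w := by
    intro v w p
    induction p with
    | nil => rfl
    | cons h _ ih => exact (hφ _ _ h).trans ih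
  refine Nat.card_le_card_of_surjective
    (SimpleGraph.ConnectedComponent.lift φ fun v w p _ => hwalk v w p) ?_
  intro a
  obtain ⟨v, rfl⟩ := hsurj a
  exact ⟨G.connectedComponentMk v, rfl⟩

namespace DGraph

/- In the paper's names, `diag v i = u_{ii}`, `diag' v i = u'_{ii}` (with `u'_{11} = u_{11}`),
`upper v i = u_{i,i+1}` and `lower v i = u_{i+1,i}` for `i ≥ 1`. With `p_{01} = p_1` and
`l_{10} = l_1` the incidence equations become uniform in `i ≥ 1`: see `incD.diag_succ` and the
three lemmas after it. -/

def diag {R : Type} [Zero R] (v : ℕ → R) : ℕ → R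
  | 0 => 0
  | 1 => v 1
  | i + 2 => v (4 * i + 4)

def diag' {R : Type} [Zero R] (v : ℕ → R) : ℕ → R
  | 0 => 0
  | 1 => v 1
  | i + 2 => v (4 * i + 5)

def upper {R : Type} (v : ℕ → R) : ℕ → R
  | 0 => v 0
  | i + 1 => v (4 * i + 2)

def lower {R : Type} (v : ℕ → R) : ℕ → R
  | 0 => v 0
  | i + 1 => v (4 * i + 3)

section Invariants

variable {R : Type} [CommRing R]

/- Both are `a_{n+2} = u_{n+2,n+2} - u'_{n+2,n+2} + ∑_{i=1}^{n+1} u_{ii} u'_{n+2-i,n+2-i}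
- ∑_{i=0}^{n+1} u_{i,i+1} u_{n+2-i,n+1-i}`, with `u_{01} = p_1, u_{10} = 0` for a point and
`u_{01} = 0, u_{10} = l_1` for a line. -/

def pointInvariant (n : ℕ) (v : ℕ → R) : R :=
  diag v (n + 2) - diag' v (n + 2) - v 0 * lower v (n + 1)
    + ∑ j ∈ range (n + 1), diag v (j + 1) * diag' v (n - j + 1)
    - ∑ j ∈ range n, upper v (j + 1) * lower v (n - j)

def lineInvariant (n : ℕ) (v : ℕ → R) : R :=
  diag v (n + 2) - diag' v (n + 2) - v 0 * upper v (n + 1)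
    + ∑ j ∈ range (n + 1), diag v (j + 1) * diag' v (n - j + 1)
    - ∑ j ∈ range n, upper v (j + 1) * lower v (n - j)

theorem lineInvariant_eq_pointInvariant {n : ℕ} {P L : ℕ → R}
    (hdiag : ∀ i ≤ n + 1, diag L (i + 1) = diag P (i + 1) + L 0 * upper P i)
    (hdiag' : ∀ i ≤ n + 1, diag' L (i + 1) = diag' P (i + 1) + P 0 * lower L i)
    (hupper : ∀ i ≤ n, upper L (i + 1) = upper P (i + 1) + P 0 * diag L (i + 1))
    (hlower : ∀ i ≤ n, lower L (i + 1) = lower P (i + 1) + L 0 * diag' P (i + 1)) :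
    lineInvariant n L = pointInvariant n P := by
  have hdiagSum : ∑ j ∈ range (n + 1), diag L (j + 1) * diag' L (n - j + 1)
      = ∑ j ∈ range (n + 1), diag P (j + 1) * diag' P (n - j + 1)
        + L 0 * ∑ j ∈ range (n + 1), upper P j * diag' P (n - j + 1)
        + P 0 * ∑ j ∈ range (n + 1), diag L (j + 1) * lower L (n - j) := by
    rw [mul_sum, mul_sum, ← sum_add_distrib, ← sum_add_distrib]
    refine sum_congr rfl fun j hj => ?_
    have hj : j ≤ n := Nat.lt_succ_iff.mp (mem_range.mp hj)
    rw [hdiag' (n - j) (by omega)]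
    linear_combination diag' P (n - j + 1) * hdiag j (by omega)
  have hoffSum : ∑ j ∈ range n, upper L (j + 1) * lower L (n - j)
      = ∑ j ∈ range n, upper P (j + 1) * lower P (n - j)
        + L 0 * ∑ j ∈ range n, upper P (j + 1) * diag' P (n - (j + 1) + 1)
        + P 0 * ∑ j ∈ range n, diag L (j + 1) * lower L (n - j) := by
    rw [mul_sum, mul_sum, ← sum_add_distrib, ← sum_add_distrib]
    refine sum_congr rfl fun j hj => ?_
    have hj : j < n := mem_range.mp hj
    obtain ⟨m, hm⟩ : ∃ m, n - j = m + 1 := ⟨n - j - 1, by omega⟩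
    rw [hm, show n - (j + 1) + 1 = m + 1 by omega]
    linear_combination lower L (m + 1) * hupper j hj.le + upper P (j + 1) * hlower m (by omega)
  have hshift : ∑ j ∈ range (n + 1), upper P j * diag' P (n - j + 1)
      = ∑ j ∈ range n, upper P (j + 1) * diag' P (n - (j + 1) + 1) + P 0 * diag' P (n + 1) :=
    sum_range_succ' _ n
  have hlast : ∑ j ∈ range (n + 1), diag L (j + 1) * lower L (n - j)
      = ∑ j ∈ range n, diag L (j + 1) * lower L (n - j) + diag L (n + 1) * L 0 := by
    rw [sum_range_succ, Nat.sub_self]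
    rfl
  unfold lineInvariant pointInvariant
  linear_combination hdiag (n + 1) le_rfl - hdiag' (n + 1) le_rfl - L 0 * hupper n le_rfl
    - P 0 * hlower n le_rfl + hdiagSum - hoffSum + L 0 * hshift + P 0 * hlast

end Invariants

end DGraph

open DGraph

theorem rhsD_of_three_le {R : Type} [Mul R] (p l : ℕ → R) {m : ℕ} (hm : 3 ≤ m) :
    rhsD p l m = if m % 4 = 0 ∨ m % 4 = 3 then l 0 * p (m - 2) else l (m - 2) * p 0 := by
  obtain ⟨m, rfl⟩ : ∃ m', m = m' + 3 := ⟨m - 3, by omega⟩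
  rfl

variable {F : Type} [Field F] {k : ℕ} {p l : Fin k → F}

theorem incD.extD_eq (h : incD k p l) {m : ℕ} (hm : 1 ≤ m) (hmk : m < k) :
    extD l m = extD p m + rhsD (extD p) (extD l) m :=
  sub_eq_iff_eq_add'.mp (h m hm hmk)

theorem incD.diag_succ (h : incD k p l) {i : ℕ} (hi : 4 * i + 2 ≤ k) :
    diag (extD l) (i + 1) = diag (extD p) (i + 1) + extD l 0 * upper (extD p) i := by
  cases i with
  | zero => exact h.extD_eq le_rfl (by omega)
  | succ i =>
    have e := h.extD_eq (m := 4 * i + 4) (by omega) (by omega)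
    rwa [rhsD_of_three_le _ _ (by omega), if_pos (by omega),
      show 4 * i + 4 - 2 = 4 * i + 2 by omega] at e

theorem incD.diag'_succ (h : incD k p l) {i : ℕ} (hi : 4 * i + 2 ≤ k) :
    diag' (extD l) (i + 1) = diag' (extD p) (i + 1) + extD p 0 * lower (extD l) i := by
  cases i with
  | zero =>
    show extD l 1 = extD p 1 + extD p 0 * extD l 0
    rw [h.extD_eq le_rfl (by omega), rhsD, mul_comm]
  | succ i =>
    have e := h.extD_eq (m := 4 * i + 5) (by omega) (by omega)
    rw [rhsD_of_three_le _ _ (by omega), if_neg (by omega),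
      show 4 * i + 5 - 2 = 4 * i + 3 by omega] at e
    show extD l (4 * i + 5) = extD p (4 * i + 5) + extD p 0 * extD l (4 * i + 3)
    rw [e, mul_comm (extD l _)]

theorem incD.upper_succ (h : incD k p l) {i : ℕ} (hi : 4 * i + 3 ≤ k) :
    upper (extD l) (i + 1) = upper (extD p) (i + 1) + extD p 0 * diag (extD l) (i + 1) := by
  cases i with
  | zero =>
    show extD l 2 = extD p 2 + extD p 0 * extD l 1
    rw [h.extD_eq (by omega) (by omega), rhsD, mul_comm]
  | succ i =>
    have e := h.extD_eq (m := 4 * i + 6) (by omega) (by omega)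
    rw [rhsD_of_three_le _ _ (by omega), if_neg (by omega),
      show 4 * i + 6 - 2 = 4 * i + 4 by omega] at e
    show extD l (4 * i + 6) = extD p (4 * i + 6) + extD p 0 * extD l (4 * i + 4)
    rw [e, mul_comm (extD l _)]

theorem incD.lower_succ (h : incD k p l) {i : ℕ} (hi : 4 * i + 4 ≤ k) :
    lower (extD l) (i + 1) = lower (extD p) (i + 1) + extD l 0 * diag' (extD p) (i + 1) := by
  have e := h.extD_eq (m := 4 * i + 3) (by omega) (by omega)
  rw [rhsD_of_three_le _ _ (by omega), if_pos (by omega)] at e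
  cases i with
  | zero => exact e
  | succ i => rwa [show 4 * (i + 1) + 3 - 2 = 4 * i + 5 by omega] at e

theorem incD.lineInvariant_eq_pointInvariant (h : incD k p l) {n : ℕ} (hn : 4 * n + 6 ≤ k) :
    lineInvariant n (extD l) = pointInvariant n (extD p) :=
  DGraph.lineInvariant_eq_pointInvariant (fun _ hi => h.diag_succ (by omega))
    (fun _ hi => h.diag'_succ (by omega)) (fun _ hi => h.upper_succ (by omega))
    (fun _ hi => h.lower_succ (by omega))

namespace DGraph

/- The coordinate `u'_{n+2,n+2}` (index `4n+5`) is `-a n`, all others vanish. -/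
def pointOfInvariants {R : Type} [Ring R] (k : ℕ) (a : ℕ → R) : Fin k → R :=
  fun m => if (m : ℕ) % 4 = 1 ∧ 4 < (m : ℕ) then -a (m / 4 - 1) else 0

theorem extD_pointOfInvariants {R : Type} [Ring R] {k m : ℕ} (hm : m < k) (a : ℕ → R) :
    extD (pointOfInvariants k a) m = if m % 4 = 1 ∧ 4 < m then -a (m / 4 - 1) else 0 := by
  rw [extD, dif_pos hm]
  rfl

theorem pointInvariant_pointOfInvariants {R : Type} [CommRing R] {k n : ℕ} (hn : 4 * n + 6 ≤ k)
    (a : ℕ → R) : pointInvariant n (extD (pointOfInvariants k a)) = a n := by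
  have hzero : ∀ m, ¬(m % 4 = 1 ∧ 4 < m) → extD (pointOfInvariants k a) m = 0 := by
    intro m hm
    by_cases hmk : m < k
    · rw [extD_pointOfInvariants hmk, if_neg hm]
    · rw [extD, dif_neg hmk]
  have hdiag : ∀ i, diag (extD (pointOfInvariants k a)) i = 0 := by
    rintro (_ | _ | i)
    exacts [rfl, hzero 1 (by omega), hzero (4 * i + 4) (by omega)]
  have hupper : ∀ i, upper (extD (pointOfInvariants k a)) i = 0 := by
    rintro (_ | i)
    exacts [hzero 0 (by omega), hzero (4 * i + 2) (by omega)]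
  have hdiag' : diag' (extD (pointOfInvariants k a)) (n + 2) = -a n := by
    show extD (pointOfInvariants k a) (4 * n + 5) = -a n
    rw [extD_pointOfInvariants (by omega), if_pos ⟨by omega, by omega⟩]
    congr 2
    omega
  simp only [pointInvariant, hdiag, hupper, hdiag', hzero 0 (by omega), zero_mul,
    sum_const_zero]
  ring

def invariants {R : Type} [CommRing R] (k t : ℕ) : (Fin k → R) ⊕ (Fin k → R) → Fin t → R
  | .inl p => fun j => pointInvariant j (extD p)
  | .inr l => fun j => lineInvariant j (extD l)

variable {t : ℕ}

theorem invariants_eq_of_adj (hk : ∀ j : Fin t, 4 * (j : ℕ) + 6 ≤ k)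
    {v w : (Fin k → F) ⊕ (Fin k → F)} (h : (DGraph k F).Adj v w) :
    invariants k t v = invariants k t w := by
  rcases v with p | l <;> rcases w with p' | l'
  · exact h.elim
  · exact funext fun j => (incD.lineInvariant_eq_pointInvariant h (hk j)).symm
  · exact funext fun j => incD.lineInvariant_eq_pointInvariant h (hk j)
  · exact h.elim

theorem invariants_surjective {R : Type} [CommRing R]
    (hk : ∀ j : Fin t, 4 * (j : ℕ) + 6 ≤ k) :
    Function.Surjective (invariants (R := R) k t) := by
  intro b
  refine ⟨.inl (pointOfInvariants k fun n => if h : n < t then b ⟨n, h⟩ else 0), funext fun j => ?_⟩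
  simp only [invariants, pointInvariant_pointOfInvariants (hk j), dif_pos j.isLt]

end DGraph

theorem statement4 (q k : ℕ) (F : Type) [Field F] [Fintype F]
    (hF : Fintype.card F = q) :
    q ^ ((k + 2) / 4 - 1) ≤ Nat.card (DGraph k F).ConnectedComponent := by
  have hk : ∀ j : Fin ((k + 2) / 4 - 1), 4 * (j : ℕ) + 6 ≤ k := fun j => by omega
  calc q ^ ((k + 2) / 4 - 1) = Nat.card (Fin ((k + 2) / 4 - 1) → F) := by simp [hF]
    _ ≤ Nat.card (DGraph k F).ConnectedComponent :=
      (DGraph k F).card_le_card_connectedComponent_of_surjective _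
        (fun _ _ => invariants_eq_of_adj hk) (invariants_surjective hk)
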